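/- arXiv:1802.03451 — 2 statements merged into one kernel-verified Lean document; each statement's English description precedes it below -/
import Mathlib

section
/- Let Â_1, Â_2, … be independent unbiased estimators of a symmetric real D×D matrix A, and let T̂_k be defined by the randomized Chebyshev recursion T̂_0 = I, T̂_1 = Â_1, T̂_k = 2Â_k T̂_{k-1} − T̂_{k-2}. Suppose 4E[‖Â_k‖²] + 2E[‖Â_k‖] + 1 ≤ α for all k, where ‖·‖ is the spectral norm. Then for all k ≥ 0, E[‖T̂_k‖_F²] ≤ D α^k. -/
/-!
Column by column, `‖2XY - Z‖ ≤ 2‖X‖‖Y‖ + ‖Z‖` with the spectral norm of `X`; squaring and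
splitting the cross term as `2uv ≤ u²/s + s v²` with `s = √α` bounds `‖T̂ₖ‖_F²` pointwise by a
combination of `‖T̂ₖ₋₁‖_F²` and `‖T̂ₖ₋₂‖_F²` with coefficients `4‖Âₖ‖²`, `2‖Âₖ‖/s`, `2s‖Âₖ‖`, `1`.
As `Âₖ` is independent of `Â₁, …, Âₖ₋₁`, hence of `T̂ₖ₋₁` and `T̂ₖ₋₂`, the expectations factor,
and the induction closes because `4a₂s² + 4a₁s + 1 ≤ s⁴` whenever `4a₂ + 2a₁ + 1 ≤ s²`.
-/

open Matrix MeasureTheory ProbabilityTheory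
open scoped Matrix.Norms.L2Operator

noncomputable section

instance {D : ℕ} : MeasurableSpace (Matrix (Fin D) (Fin D) ℝ) :=
  inferInstanceAs (MeasurableSpace (Fin D → Fin D → ℝ))

/-- The randomized Chebyshev recursion `T̂_0 = I`, `T̂_1 = Â_1`,
`T̂_k = 2 Â_k T̂_{k-1} - T̂_{k-2}`. -/
def randChebT {D : ℕ} {Ω : Type*} (Ahat : ℕ → Ω → Matrix (Fin D) (Fin D) ℝ) :
    ℕ → Ω → Matrix (Fin D) (Fin D) ℝ
  | 0 => fun _ => 1
  | 1 => fun ω => Ahat 1 ω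
  | (k + 2) => fun ω =>
      (2 : ℝ) • (Ahat (k + 2) ω * randChebT Ahat (k + 1) ω) - randChebT Ahat k ω

/-- Squared Frobenius norm of a matrix. -/
def frobSq {D : ℕ} (M : Matrix (Fin D) (Fin D) ℝ) : ℝ :=
  ∑ i, ∑ j, (M i j) ^ 2

/-- Entrywise expectation of a random matrix. -/
def matExp {D : ℕ} {Ω : Type*} [MeasurableSpace Ω] (μ : Measure Ω)
    (X : Ω → Matrix (Fin D) (Fin D) ℝ) : Matrix (Fin D) (Fin D) ℝ :=
  Matrix.of fun i j => ∫ ω, X ω i j ∂μ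

instance {D : ℕ} : BorelSpace (Matrix (Fin D) (Fin D) ℝ) := Pi.borelSpace

section FrobeniusNorm

variable {D : ℕ}

lemma frobSq_eq_sum_norm_col_sq (M : Matrix (Fin D) (Fin D) ℝ) :
    frobSq M = ∑ j, ‖WithLp.toLp 2 (M.col j)‖ ^ 2 := by
  simp only [frobSq, EuclideanSpace.norm_sq_eq, Real.norm_eq_abs, sq_abs]
  exact Finset.sum_comm

lemma frobSq_nonneg (M : Matrix (Fin D) (Fin D) ℝ) : 0 ≤ frobSq M := by
  unfold frobSq; positivity

lemma frobSq_one : frobSq (1 : Matrix (Fin D) (Fin D) ℝ) = D := by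
  simp [frobSq, Matrix.one_apply, apply_ite (· ^ 2 : ℝ → ℝ)]

lemma norm_col_mul_le (X Y : Matrix (Fin D) (Fin D) ℝ) (j : Fin D) :
    ‖WithLp.toLp 2 ((X * Y).col j)‖ ≤ ‖X‖ * ‖WithLp.toLp 2 (Y.col j)‖ := by
  convert X.l2_opNorm_mulVec (WithLp.toLp 2 (Y.col j)) using 3
  ext i
  simp [Matrix.mul_apply, Matrix.mulVec, dotProduct]

lemma frobSq_mul_le (X Y : Matrix (Fin D) (Fin D) ℝ) :
    frobSq (X * Y) ≤ ‖X‖ ^ 2 * frobSq Y := by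
  simp only [frobSq_eq_sum_norm_col_sq, Finset.mul_sum, ← mul_pow]
  gcongr with j
  exact norm_col_mul_le X Y j

lemma frobSq_le_card_mul_sq_norm (M : Matrix (Fin D) (Fin D) ℝ) :
    frobSq M ≤ D * ‖M‖ ^ 2 := by
  simpa [frobSq_one, mul_comm] using frobSq_mul_le M 1

end FrobeniusNorm

lemma sq_le_of_le_two_mul_add {w x u v s : ℝ} (hw : 0 ≤ w) (hx : 0 ≤ x) (hs : 0 < s)
    (h : w ≤ 2 * x * u + v) :
    w ^ 2 ≤ 4 * x ^ 2 * u ^ 2 + 2 * x * (u ^ 2 / s + s * v ^ 2) + v ^ 2 := by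
  have amgm : 2 * u * v ≤ u ^ 2 / s + s * v ^ 2 := by
    have : u ^ 2 / s + s * v ^ 2 - 2 * u * v = (u - s * v) ^ 2 / s := by field_simp; ring
    nlinarith [div_nonneg (sq_nonneg (u - s * v)) hs.le]
  nlinarith [mul_le_mul_of_nonneg_left amgm (mul_nonneg zero_le_two hx), pow_le_pow_left₀ hw h 2]

lemma frobSq_chebStep_le {D : ℕ} (X Y Z : Matrix (Fin D) (Fin D) ℝ) {s : ℝ} (hs : 0 < s) :
    frobSq ((2 : ℝ) • (X * Y) - Z) ≤
      4 * ‖X‖ ^ 2 * frobSq Y + 2 * ‖X‖ * (frobSq Y / s + s * frobSq Z) + frobSq Z := by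
  simp only [frobSq_eq_sum_norm_col_sq, Finset.mul_sum, Finset.sum_div, ← Finset.sum_add_distrib]
  gcongr with j
  refine sq_le_of_le_two_mul_add (norm_nonneg _) (norm_nonneg _) hs ?_
  calc ‖WithLp.toLp 2 (((2 : ℝ) • (X * Y) - Z).col j)‖
      = ‖(2 : ℝ) • WithLp.toLp 2 ((X * Y).col j) - WithLp.toLp 2 (Z.col j)‖ := rfl
    _ ≤ 2 * ‖WithLp.toLp 2 ((X * Y).col j)‖ + ‖WithLp.toLp 2 (Z.col j)‖ := by
      exact (norm_sub_le _ _).trans_eq (by rw [norm_smul, Real.norm_two])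
    _ ≤ 2 * ‖X‖ * ‖WithLp.toLp 2 (Y.col j)‖ + ‖WithLp.toLp 2 (Z.col j)‖ := by
      rw [mul_assoc]; gcongr; exact norm_col_mul_le X Y j

lemma chebMoment_step_le {a₁ a₂ s c e₀ e₁ : ℝ} (ha₁ : 0 ≤ a₁) (ha₂ : 0 ≤ a₂) (hs : 0 < s)
    (hc : 0 ≤ c) (hα : 4 * a₂ + 2 * a₁ + 1 ≤ s ^ 2) (he₀ : e₀ ≤ c) (he₁ : e₁ ≤ c * s ^ 2) :
    4 * a₂ * e₁ + 2 * a₁ * (e₁ / s + s * e₀) + e₀ ≤ c * s ^ 4 := by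
  calc 4 * a₂ * e₁ + 2 * a₁ * (e₁ / s + s * e₀) + e₀
      ≤ 4 * a₂ * (c * s ^ 2) + 2 * a₁ * (c * s ^ 2 / s + s * c) + c := by gcongr
    _ = c * (4 * a₂ * s ^ 2 + 4 * a₁ * s + 1) := by field_simp; ring
    _ ≤ c * s ^ 4 := by
      gcongr
      nlinarith [mul_le_mul_of_nonneg_left hα (sq_nonneg s), mul_nonneg ha₁ (sq_nonneg (s - 1))]

lemma continuous_frobSq {D : ℕ} : Continuous (frobSq (D := D)) := by
  unfold frobSq; fun_prop

namespace ProbabilityTheory.iIndepFun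

variable {Ω ι β γ : Type*} [MeasurableSpace Ω] {μ : Measure Ω} [mβ : MeasurableSpace β]
  [MeasurableSpace γ]

lemma indepFun_of_measurable_biSup {f : ι → Ω → β} (hf : iIndepFun f μ)
    (hmeas : ∀ i, Measurable (f i)) {S : Set ι} {k : ι} (hk : k ∉ S) {g : Ω → γ}
    (hg : Measurable[⨆ i ∈ S, mβ.comap (f i)] g) : IndepFun (f k) g μ := by
  rw [IndepFun_iff_Indep]
  have hindep := indep_iSup_of_disjoint (fun i => (hmeas i).comap_le) hf.iIndep
    (Set.disjoint_singleton_left.2 hk)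
  refine indep_of_indep_of_le_right (indep_of_indep_of_le_left hindep ?_) hg.comap_le
  exact le_iSup₂ (f := fun i (_ : i ∈ ({k} : Set ι)) => mβ.comap (f i)) k rfl

end ProbabilityTheory.iIndepFun

section RandomMatrices

variable {D : ℕ} {Ω : Type*}

lemma measurable_randChebT {m : MeasurableSpace Ω} {Ahat : ℕ → Ω → Matrix (Fin D) (Fin D) ℝ} :
    ∀ {n : ℕ}, (∀ j ≤ n, Measurable (Ahat j)) → Measurable (randChebT Ahat n)
  | 0, _ => measurable_const
  | 1, h => h 1 le_rfl
  | n + 2, h =>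
    (((h (n + 2) le_rfl).mul (measurable_randChebT fun j hj => h j (by omega))).const_smul
      (2 : ℝ)).sub (measurable_randChebT fun j hj => h j (by omega))

variable [MeasurableSpace Ω] {μ : Measure Ω}

lemma indepFun_randChebT {Ahat : ℕ → Ω → Matrix (Fin D) (Fin D) ℝ}
    (hmeas : ∀ k, Measurable (Ahat k)) (hindep : iIndepFun Ahat μ) {n k : ℕ} (hnk : n < k) :
    IndepFun (Ahat k) (randChebT Ahat n) μ :=
  hindep.indepFun_of_measurable_biSup hmeas (S := Set.Iic n) (not_le.2 hnk) <|
    measurable_randChebT fun j hj => measurable_iff_comap_le.2 <|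
      le_iSup₂ (f := fun i (_ : i ∈ Set.Iic n) => MeasurableSpace.comap (Ahat i) inferInstance) j hj

lemma integrable_and_integral_le_of_le {f g : Ω → ℝ} (hf : AEStronglyMeasurable f μ)
    (hf₀ : 0 ≤ f) (hg : Integrable g μ) (hfg : f ≤ g) :
    Integrable f μ ∧ ∫ ω, f ω ∂μ ≤ ∫ ω, g ω ∂μ :=
  ⟨hg.mono' hf (ae_of_all _ fun ω => by rw [Real.norm_of_nonneg (hf₀ ω)]; exact hfg ω),
    integral_mono_of_nonneg (ae_of_all _ hf₀) hg (ae_of_all _ hfg)⟩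

lemma integrable_frobSq_and_integral_le {X : Ω → Matrix (Fin D) (Fin D) ℝ} (hX : Measurable X)
    (hX2 : MemLp (fun ω => ‖X ω‖) 2 μ) :
    Integrable (fun ω => frobSq (X ω)) μ ∧
      ∫ ω, frobSq (X ω) ∂μ ≤ D * ∫ ω, ‖X ω‖ ^ 2 ∂μ := by
  rw [← integral_const_mul]
  exact integrable_and_integral_le_of_le (continuous_frobSq.measurable.comp hX).aestronglyMeasurable
    (fun ω => frobSq_nonneg _) (hX2.integrable_sq.const_mul _)
    (fun ω => frobSq_le_card_mul_sq_norm _)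

lemma integrable_frobSq_chebStep_and_integral_le [IsFiniteMeasure μ]
    {X Y Z : Ω → Matrix (Fin D) (Fin D) ℝ}
    (hX : Measurable X) (hY : Measurable Y) (hZ : Measurable Z)
    (hXY : IndepFun X Y μ) (hXZ : IndepFun X Z μ) (hX2 : MemLp (fun ω => ‖X ω‖) 2 μ)
    (hYint : Integrable (fun ω => frobSq (Y ω)) μ) (hZint : Integrable (fun ω => frobSq (Z ω)) μ)
    {s : ℝ} (hs : 0 < s) :
    Integrable (fun ω => frobSq ((2 : ℝ) • (X ω * Y ω) - Z ω)) μ ∧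
      ∫ ω, frobSq ((2 : ℝ) • (X ω * Y ω) - Z ω) ∂μ ≤
        4 * (∫ ω, ‖X ω‖ ^ 2 ∂μ) * (∫ ω, frobSq (Y ω) ∂μ)
          + 2 * (∫ ω, ‖X ω‖ ∂μ) * ((∫ ω, frobSq (Y ω) ∂μ) / s + s * ∫ ω, frobSq (Z ω) ∂μ)
          + ∫ ω, frobSq (Z ω) ∂μ := by
  have hN2Y : IndepFun (fun ω => ‖X ω‖ ^ 2) (fun ω => frobSq (Y ω)) μ :=
    hXY.comp (measurable_norm.pow_const 2) continuous_frobSq.measurable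
  have hNY : IndepFun (fun ω => ‖X ω‖) (fun ω => frobSq (Y ω)) μ :=
    hXY.comp measurable_norm continuous_frobSq.measurable
  have hNZ : IndepFun (fun ω => ‖X ω‖) (fun ω => frobSq (Z ω)) μ :=
    hXZ.comp measurable_norm continuous_frobSq.measurable
  have iN2Y : Integrable (fun ω => 4 * (‖X ω‖ ^ 2 * frobSq (Y ω))) μ :=
    (hN2Y.integrable_mul hX2.integrable_sq hYint).const_mul 4
  have iNY : Integrable (fun ω => 2 / s * (‖X ω‖ * frobSq (Y ω))) μ :=
    (hNY.integrable_mul (hX2.integrable one_le_two) hYint).const_mul (2 / s)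
  have iNZ : Integrable (fun ω => 2 * s * (‖X ω‖ * frobSq (Z ω))) μ :=
    (hNZ.integrable_mul (hX2.integrable one_le_two) hZint).const_mul (2 * s)
  have iY : Integrable (fun ω => 4 * (‖X ω‖ ^ 2 * frobSq (Y ω))
      + 2 / s * (‖X ω‖ * frobSq (Y ω))) μ := iN2Y.add iNY
  have iYZ : Integrable (fun ω => 4 * (‖X ω‖ ^ 2 * frobSq (Y ω)) + 2 / s * (‖X ω‖ * frobSq (Y ω))
      + 2 * s * (‖X ω‖ * frobSq (Z ω))) μ := iY.add iNZ
  have hmaj : Integrable (fun ω => 4 * (‖X ω‖ ^ 2 * frobSq (Y ω)) + 2 / s * (‖X ω‖ * frobSq (Y ω))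
      + 2 * s * (‖X ω‖ * frobSq (Z ω)) + frobSq (Z ω)) μ := iYZ.add hZint
  have hle : ∀ ω, frobSq ((2 : ℝ) • (X ω * Y ω) - Z ω) ≤ 4 * (‖X ω‖ ^ 2 * frobSq (Y ω))
      + 2 / s * (‖X ω‖ * frobSq (Y ω)) + 2 * s * (‖X ω‖ * frobSq (Z ω)) + frobSq (Z ω) :=
    fun ω => (frobSq_chebStep_le _ _ _ hs).trans_eq (by field_simp; ring)
  have hstep : Measurable fun ω => (2 : ℝ) • (X ω * Y ω) - Z ω :=
    ((hX.mul hY).const_smul (2 : ℝ)).sub hZ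
  obtain ⟨hint, hint_le⟩ := integrable_and_integral_le_of_le
    (continuous_frobSq.measurable.comp hstep).aestronglyMeasurable (fun _ => frobSq_nonneg _)
    hmaj hle
  refine ⟨hint, hint_le.trans_eq ?_⟩
  rw [integral_add iYZ hZint, integral_add iY iNZ,
    integral_add iN2Y iNY, integral_const_mul, integral_const_mul, integral_const_mul,
    hN2Y.integral_fun_mul_eq_mul_integral hX2.integrable_sq.1 hYint.1,
    hNY.integral_fun_mul_eq_mul_integral hX2.1 hYint.1,
    hNZ.integral_fun_mul_eq_mul_integral hX2.1 hZint.1]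
  ring

end RandomMatrices

theorem frobSq_randChebT_le_general {D : ℕ} {Ω : Type*} [MeasurableSpace Ω]
    (μ : Measure Ω) [IsProbabilityMeasure μ]
    (Ahat : ℕ → Ω → Matrix (Fin D) (Fin D) ℝ)
    (hmeas : ∀ k, Measurable (Ahat k))
    (hindep : iIndepFun Ahat μ)
    (hL2 : ∀ k, MemLp (fun ω => ‖Ahat k ω‖) 2 μ)
    (α : ℝ)
    (hα : ∀ k, 4 * (∫ ω, ‖Ahat k ω‖ ^ 2 ∂μ) + 2 * (∫ ω, ‖Ahat k ω‖ ∂μ) + 1 ≤ α)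
    (k : ℕ) :
    (∫ ω, frobSq (randChebT Ahat k ω) ∂μ) ≤ D * α ^ k := by
  have ha₂ (k : ℕ) : 0 ≤ ∫ ω, ‖Ahat k ω‖ ^ 2 ∂μ := integral_nonneg fun ω => by positivity
  have ha₁ (k : ℕ) : 0 ≤ ∫ ω, ‖Ahat k ω‖ ∂μ := integral_nonneg fun ω => by positivity
  obtain ⟨s, hs, rfl⟩ : ∃ s, 0 < s ∧ α = s ^ 2 := by
    have : 0 < α := by linarith [hα 0, ha₁ 0, ha₂ 0]
    exact ⟨√α, Real.sqrt_pos.2 this, (Real.sq_sqrt this.le).symm⟩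
  have hT (n : ℕ) : Measurable (randChebT Ahat n) := measurable_randChebT fun j _ => hmeas j
  suffices key : ∀ n, Integrable (fun ω => frobSq (randChebT Ahat n ω)) μ ∧
      ∫ ω, frobSq (randChebT Ahat n ω) ∂μ ≤ D * (s ^ 2) ^ n from (key k).2
  intro n
  induction n using Nat.twoStepInduction with
  | zero => simp [randChebT, frobSq_one]
  | one =>
    obtain ⟨hint, hle⟩ := integrable_frobSq_and_integral_le (hmeas 1) (hL2 1)
    exact ⟨hint, hle.trans (by gcongr; linarith [hα 1, ha₁ 1, ha₂ 1])⟩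
  | more n ih₀ ih₁ =>
    obtain ⟨hint, hle⟩ := integrable_frobSq_chebStep_and_integral_le (hmeas (n + 2))
      (hT (n + 1)) (hT n) (indepFun_randChebT hmeas hindep (by omega))
      (indepFun_randChebT hmeas hindep (by omega)) (hL2 (n + 2)) ih₁.1 ih₀.1 hs
    have hmoment := chebMoment_step_le (ha₁ _) (ha₂ _) hs (by positivity) (hα (n + 2))
      ih₀.2 (ih₁.2.trans_eq (by ring))
    exact ⟨hint, (hle.trans hmoment).trans_eq (by ring)⟩

/-- Variance bound for the randomized Chebyshev recursion: if
`4 E[‖Â_k‖²] + 2 E[‖Â_k‖] + 1 ≤ α` for all `k` (spectral norm), then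
`E[‖T̂_k‖_F²] ≤ D α^k` for all `k`. -/
theorem frobSq_randChebT_le {D : ℕ} {Ω : Type*} [MeasurableSpace Ω]
    (μ : Measure Ω) [IsProbabilityMeasure μ]
    (A : Matrix (Fin D) (Fin D) ℝ) (hAsymm : A.IsSymm)
    (Ahat : ℕ → Ω → Matrix (Fin D) (Fin D) ℝ)
    (hmeas : ∀ k, Measurable (Ahat k))
    (hindep : iIndepFun Ahat μ)
    (hL2 : ∀ k, MemLp (fun ω => ‖Ahat k ω‖) 2 μ)
    (hunbiased : ∀ k, matExp μ (Ahat k) = A)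
    (α : ℝ)
    (hα : ∀ k, 4 * (∫ ω, ‖Ahat k ω‖ ^ 2 ∂μ) + 2 * (∫ ω, ‖Ahat k ω‖ ∂μ) + 1 ≤ α)
    (k : ℕ) :
    (∫ ω, frobSq (randChebT Ahat k ω) ∂μ) ≤ D * α ^ k :=
  frobSq_randChebT_le_general μ Ahat hmeas hindep hL2 α hα k
end
end

section
/- For 0 < φ < 1, the shifted/scaled Marchenko–Pastur density ψ̃(λ) = (2/π) · √(1−λ²) / (1 + 2λ√φ + φ) on [−1,1] has Chebyshev expansion integrals ∫_{−1}^1 T_k(λ) ψ̃(λ) dλ equal to 1 for k = 0, −√φ/2 for k = 1, and −(1/2)(1−φ)(−√φ)^{k−2} for k ≥ 2. -/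
/-!
Write `t = √φ` and `D(x) = 1 + 2xt + t²`. The three-term recurrence gives
`D · T_{k+1} = t T_{k+2} + (1 + t²) T_{k+1} + t T_k` (and `D · T_0 = (1 + t²) T_0 + 2t T_1`), so the
moments `I_k = ∫ T_k ψ̃` satisfy a second-order linear recurrence whose right-hand sides are the
Chebyshev moments of the semicircle `√(1 - x²)`; these vanish except in degrees `0` and `2`.
From degree `2` on the recurrence is homogeneous with characteristic roots `-t` and `-1/t`, and
since `|T_k| ≤ 1` on `[-1, 1]` the moments are bounded, which excludes the growing mode. The
remaining three inhomogeneous equations then determine `I_0`, `I_1`, `I_2`; no integral against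
`ψ̃` is ever evaluated directly.
-/

noncomputable section

def chebT : ℕ → ℝ → ℝ
  | 0, _ => 1
  | 1, x => x
  | (k + 2), x => 2 * x * chebT (k + 1) x - chebT k x

open Real Set Filter Topology intervalIntegral Polynomial.Chebyshev

theorem chebT_eq_eval_T : ∀ (k : ℕ) (x : ℝ), chebT k x = (T ℝ k).eval x
  | 0, x => by simp [chebT]
  | 1, x => by simp [chebT]
  | k + 2, x => by
    rw [chebT, chebT_eq_eval_T (k + 1), chebT_eq_eval_T k]
    push_cast
    simp [T_add_two]

theorem continuous_chebT (k : ℕ) : Continuous (chebT k) := by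
  simp only [funext (chebT_eq_eval_T k)]
  exact Polynomial.continuous _

theorem chebT_cos (k : ℕ) (θ : ℝ) : chebT k (cos θ) = cos (k * θ) := by
  rw [chebT_eq_eval_T, T_real_cos]
  norm_cast

theorem abs_chebT_le_one (k : ℕ) {x : ℝ} (hx : |x| ≤ 1) : |chebT k x| ≤ 1 := by
  rw [chebT_eq_eval_T]
  exact abs_eval_T_real_le_one k hx

theorem integral_mul_sqrt_one_sub_sq_eq_integral_cos (f : ℝ → ℝ) :
    ∫ x in -1..1, f x * √(1 - x ^ 2) = ∫ θ in 0..π, f (cos θ) * sin θ ^ 2 := by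
  have h := integral_measureT_eq_integral_cos (f := fun x => f x * (1 - x ^ 2))
  rw [integral_measureT] at h
  simp only [← sin_sq] at h
  rw [← h]
  refine integral_congr fun x _ => ?_
  rw [mul_assoc, Real.sqrt_inv, ← div_eq_mul_inv, Real.div_sqrt]

theorem integral_cos_int_mul (n : ℤ) :
    ∫ θ in 0..π, cos (n * θ) = if n = 0 then π else 0 := by
  split_ifs with hn
  · simp [hn]
  · have h := integral_eval_T_real_measureT_of_ne_zero hn
    rw [integral_measureT_eq_integral_cos] at h
    simpa only [T_real_cos] using h

theorem integral_chebT_mul_sqrt_one_sub_sq (m : ℕ) :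
    ∫ x in -1..1, chebT m x * √(1 - x ^ 2) =
      if m = 0 then π / 2 else if m = 2 then -(π / 4) else 0 := by
  have hprod : ∀ θ : ℝ, cos (m * θ) * sin θ ^ 2 =
      cos (((m : ℤ) : ℝ) * θ) / 2 - cos (((m + 2 : ℤ) : ℝ) * θ) / 4
        - cos (((m - 2 : ℤ) : ℝ) * θ) / 4 := by
    intro θ
    push_cast
    rw [add_mul, sub_mul, cos_add, cos_sub, sin_sq, cos_two_mul, sin_two_mul]
    ring
  rw [integral_mul_sqrt_one_sub_sq_eq_integral_cos]
  simp_rw [chebT_cos, hprod]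
  rw [integral_sub, integral_sub, integral_div, integral_div, integral_div, integral_cos_int_mul,
    integral_cos_int_mul, integral_cos_int_mul]
  · split_ifs <;> first | omega | ring
  all_goals exact (by fun_prop : Continuous _).intervalIntegrable _ _

theorem eq_zero_of_eq_mul_succ_of_norm_le {𝕜 : Type*} [NormedField 𝕜] {u : ℕ → 𝕜} {r : 𝕜}
    {C : ℝ} (hr : ‖r‖ < 1) (hu : ∀ n, u n = r * u (n + 1)) (hC : ∀ n, ‖u n‖ ≤ C) (n : ℕ) :
    u n = 0 := by
  have hpow : ∀ m, u n = r ^ m * u (n + m) := by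
    intro m
    induction m with
    | zero => simp
    | succ m ih => rw [ih, hu (n + m), pow_succ, mul_assoc, add_assoc]
  have hle : ∀ m, ‖u n‖ ≤ ‖r‖ ^ m * C := fun m => by
    rw [hpow m, norm_mul, norm_pow]
    exact mul_le_mul_of_nonneg_left (hC _) (by positivity)
  have hlim : Tendsto (fun m => ‖r‖ ^ m * C) atTop (𝓝 0) := by
    simpa using (tendsto_pow_atTop_nhds_zero_of_lt_one (norm_nonneg r) hr).mul_const C
  exact norm_le_zero_iff.1 (ge_of_tendsto' hlim hle)

/-- The density `ψ̃` in the parameter `t = √φ`. -/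
def mpDensity (t x : ℝ) : ℝ := 2 / π * √(1 - x ^ 2) / (1 + 2 * x * t + t ^ 2)

def mpChebMoment (t : ℝ) (k : ℕ) : ℝ := ∫ x in -1..1, chebT k x * mpDensity t x

section

variable {t : ℝ}

theorem mpDensity_denom_pos (ht : |t| < 1) {x : ℝ} (hx : x ∈ uIcc (-1) 1) :
    0 < 1 + 2 * x * t + t ^ 2 := by
  rw [uIcc_of_le (by norm_num)] at hx
  obtain ⟨htl, htr⟩ := abs_lt.1 ht
  rcases le_total 0 t with h | h
  · nlinarith [mul_nonneg h (neg_le_iff_add_nonneg.1 hx.1)]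
  · nlinarith [mul_nonpos_of_nonpos_of_nonneg h (sub_nonneg.2 hx.2)]

theorem mpDensity_nonneg (ht : |t| < 1) {x : ℝ} (hx : x ∈ uIcc (-1) 1) : 0 ≤ mpDensity t x :=
  div_nonneg (by positivity) (mpDensity_denom_pos ht hx).le

theorem intervalIntegrable_chebT_mul_mpDensity (ht : |t| < 1) (k : ℕ) :
    IntervalIntegrable (fun x => chebT k x * mpDensity t x) MeasureTheory.volume (-1) 1 := by
  refine ContinuousOn.intervalIntegrable ((continuous_chebT k).continuousOn.mul ?_)
  exact ContinuousOn.div (by fun_prop) (by fun_prop) fun x hx => (mpDensity_denom_pos ht hx).ne'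

theorem abs_mpChebMoment_le (ht : |t| < 1) (k : ℕ) : |mpChebMoment t k| ≤ mpChebMoment t 0 := by
  refine (abs_integral_le_integral_abs (by norm_num)).trans (integral_mono_on (by norm_num)
    (intervalIntegrable_chebT_mul_mpDensity ht k).abs (intervalIntegrable_chebT_mul_mpDensity ht 0)
    fun x hx => ?_)
  have hx' : |x| ≤ 1 := abs_le.2 hx
  rw [abs_mul, abs_of_nonneg (mpDensity_nonneg ht (Icc_subset_uIcc hx)), chebT, one_mul]
  exact mul_le_of_le_one_left (mpDensity_nonneg ht (Icc_subset_uIcc hx)) (abs_chebT_le_one k hx')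

theorem mpDensity_denom_mul (ht : |t| < 1) {x : ℝ} (hx : x ∈ uIcc (-1) 1) :
    (1 + 2 * x * t + t ^ 2) * mpDensity t x = 2 / π * √(1 - x ^ 2) :=
  mul_div_cancel₀ _ (mpDensity_denom_pos ht hx).ne'

theorem mpChebMoment_recurrence (ht : |t| < 1) (k : ℕ) :
    t * mpChebMoment t (k + 2) + (1 + t ^ 2) * mpChebMoment t (k + 1) + t * mpChebMoment t k =
      2 / π * ∫ x in -1..1, chebT (k + 1) x * √(1 - x ^ 2) := by
  have hI := intervalIntegrable_chebT_mul_mpDensity ht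
  calc _ = ∫ x in -1..1, t * (chebT (k + 2) x * mpDensity t x) +
        (1 + t ^ 2) * (chebT (k + 1) x * mpDensity t x) + t * (chebT k x * mpDensity t x) := by
        rw [integral_add (((hI _).const_mul _).add ((hI _).const_mul _)) ((hI _).const_mul _),
          integral_add ((hI _).const_mul _) ((hI _).const_mul _), integral_const_mul,
          integral_const_mul, integral_const_mul]
        rfl
    _ = ∫ x in -1..1, 2 / π * (chebT (k + 1) x * √(1 - x ^ 2)) := by
      refine integral_congr fun x hx => ?_
      rw [chebT]
      linear_combination chebT (k + 1) x * mpDensity_denom_mul ht hx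
    _ = _ := integral_const_mul _ _

theorem mpChebMoment_initial (ht : |t| < 1) :
    (1 + t ^ 2) * mpChebMoment t 0 + 2 * t * mpChebMoment t 1 = 1 := by
  have hI := intervalIntegrable_chebT_mul_mpDensity ht
  calc _ = ∫ x in -1..1, (1 + t ^ 2) * (chebT 0 x * mpDensity t x) +
        2 * t * (chebT 1 x * mpDensity t x) := by
        rw [integral_add ((hI _).const_mul _) ((hI _).const_mul _), integral_const_mul,
          integral_const_mul]
        rfl
    _ = ∫ x in -1..1, 2 / π * √(1 - x ^ 2) := by
      refine integral_congr fun x hx => ?_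
      rw [chebT, chebT]
      linear_combination mpDensity_denom_mul ht hx
    _ = 1 := by
      rw [integral_const_mul, integral_sqrt_one_sub_sq]
      field_simp

theorem mpChebMoment_add_three (ht : |t| < 1) (n : ℕ) :
    mpChebMoment t (n + 3) = -t * mpChebMoment t (n + 2) := by
  set M := mpChebMoment t
  have hrec : ∀ n, M (n + 3) + t * M (n + 2) = -t * (M (n + 4) + t * M (n + 3)) := fun n => by
    have h := mpChebMoment_recurrence ht (n + 2)
    rw [integral_chebT_mul_sqrt_one_sub_sq, if_neg (by omega), if_neg (by omega)] at h
    ring_nf at h ⊢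
    linear_combination h
  have hbound : ∀ n, ‖M (n + 3) + t * M (n + 2)‖ ≤ 2 * M 0 := fun n => by
    have hM := abs_mpChebMoment_le ht
    calc ‖M (n + 3) + t * M (n + 2)‖ ≤ |M (n + 3)| + |t| * |M (n + 2)| := by
          simpa [abs_mul] using abs_add_le (M (n + 3)) (t * M (n + 2))
      _ ≤ 2 * M 0 := by nlinarith [hM (n + 3), hM (n + 2), abs_nonneg t, abs_nonneg (M (n + 2))]
  linear_combination eq_zero_of_eq_mul_succ_of_norm_le (u := fun n => M (n + 3) + t * M (n + 2))
    (by simpa using ht) hrec hbound n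

theorem mpChebMoment_zero_one_two (ht : |t| < 1) :
    mpChebMoment t 0 = 1 ∧ mpChebMoment t 1 = -t / 2 ∧
      mpChebMoment t 2 = -(1 / 2) * (1 - t ^ 2) := by
  have h0 := mpChebMoment_initial ht
  have h1 := mpChebMoment_recurrence ht 0
  have h2 := mpChebMoment_recurrence ht 1
  have h3 := mpChebMoment_add_three ht 0
  rw [integral_chebT_mul_sqrt_one_sub_sq] at h1 h2
  norm_num at h1 h2 h3
  have e2 : mpChebMoment t 2 + t * mpChebMoment t 1 = -1 / 2 := by
    field_simp at h2
    linear_combination h2 / 4 - t * h3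
  have e1 : mpChebMoment t 1 + t * mpChebMoment t 0 = t / 2 := by linear_combination h1 - t * e2
  have e0 : (1 - t ^ 2) * (mpChebMoment t 0 - 1) = 0 := by linear_combination h0 - 2 * t * e1
  have hM0 : mpChebMoment t 0 = 1 := by
    have : 1 - t ^ 2 ≠ 0 := by nlinarith [abs_lt.1 ht]
    simpa [sub_eq_zero] using (mul_eq_zero.1 e0).resolve_left this
  refine ⟨hM0, by linear_combination e1 - t * hM0, ?_⟩
  linear_combination e2 - t * e1 + t ^ 2 * hM0

theorem mpChebMoment_add_two (ht : |t| < 1) (n : ℕ) :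
    mpChebMoment t (n + 2) = -(1 / 2) * (1 - t ^ 2) * (-t) ^ n := by
  induction n with
  | zero => simpa using (mpChebMoment_zero_one_two ht).2.2
  | succ n ih => rw [mpChebMoment_add_three ht, ih, pow_succ]; ring

end

/-- Chebyshev expansion integrals of the shifted/scaled Marchenko–Pastur density
`ψ̃(λ) = (2/π) √(1−λ²)/(1 + 2λ√φ + φ)` on `[−1,1]`, for `0 < φ < 1`:
the value is `1` for `k = 0`, `−√φ/2` for `k = 1`, and
`−(1/2)(1−φ)(−√φ)^{k−2}` for `k ≥ 2`. -/
theorem marchenkoPastur_chebyshev_integral (φ : ℝ) (hφ0 : 0 < φ) (hφ1 : φ < 1) (k : ℕ) :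
    (∫ x in (-1 : ℝ)..1,
        chebT k x * (2 / Real.pi * Real.sqrt (1 - x ^ 2) / (1 + 2 * x * Real.sqrt φ + φ))) =
      if k = 0 then (1 : ℝ)
      else if k = 1 then -Real.sqrt φ / 2
      else -(1 / 2) * (1 - φ) * (-Real.sqrt φ) ^ (k - 2) := by
  set t := √φ
  have ht : |t| < 1 := by
    rw [abs_of_nonneg (Real.sqrt_nonneg φ)]
    exact (Real.sqrt_lt' one_pos).2 (by rwa [one_pow])
  rw [show φ = t ^ 2 from (Real.sq_sqrt hφ0.le).symm]
  change mpChebMoment t k = _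
  obtain ⟨h0, h1, -⟩ := mpChebMoment_zero_one_two ht
  rcases k with _ | _ | n
  · simp [h0]
  · simp [h1]
  · simp [mpChebMoment_add_two ht n]
end
end
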